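/- arXiv:1812.00284 — 4 statements merged into one kernel-verified Lean document; each statement's English description precedes it below -/
import Mathlib

section
/- Let γ ≥ 0 be an integer and let S be a γ-hyperelliptic numerical semigroup of genus g with g ≥ 2γ+1. Then the K-weight of S satisfies W_K ≥ C(g-2γ, 2) + 2γ, where C(n,2) denotes the binomial coefficient n choose 2. -/
/-- A numerical semigroup: a subset of ℕ containing 0, closed under addition,
with finite complement. -/
def IsNumericalSemigroup (S : Set ℕ) : Prop :=
  0 ∈ S ∧ (∀ a ∈ S, ∀ b ∈ S, a + b ∈ S) ∧ Sᶜ.Finite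

/-- The genus of `S`: the number of gaps (elements of ℕ not in `S`). -/
noncomputable def genus (S : Set ℕ) : ℕ := Sᶜ.ncard

/-- `gap S i` is the `(i+1)`-st smallest gap of `S`, i.e. `ℓ_{i+1}` (0-indexed). -/
noncomputable def gap (S : Set ℕ) (i : ℕ) : ℕ := Nat.nth (fun n => n ∉ S) i

/-- The K-weight of `S`: `W_K = Σ_{i=1}^{g-1} (ℓ_i - i) + g - 1`. -/
noncomputable def Kweight (S : Set ℕ) : ℕ :=
  (∑ i ∈ Finset.range (genus S - 1), (gap S i - (i + 1))) + genus S - 1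

/-- The S-weight of `S`: `W_S = Σ_{i=1}^{g} (ℓ_i - i)`. -/
noncomputable def Sweight (S : Set ℕ) : ℕ :=
  ∑ i ∈ Finset.range (genus S), (gap S i - (i + 1))

/-- `S` is γ-hyperelliptic: it has exactly γ even elements in `[2, 4γ]`, and the
`(γ+1)`-st smallest positive element of `S` is `4γ+2`. -/
def GammaHyperelliptic (γ : ℕ) (S : Set ℕ) : Prop :=
  {n | n ∈ Set.Icc 2 (4 * γ) ∧ Even n ∧ n ∈ S}.ncard = γ ∧
  Nat.nth (fun n => n ∈ S ∧ n ≠ 0) γ = 4 * γ + 2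

/-! Halving the even elements of a γ-hyperelliptic semigroup `S` gives an additive submonoid `T`
of ℕ with exactly γ gaps in `[1, 2γ]` and with `2γ + 1 ∈ T`. If `n` is a gap of `T`, then
`a ↦ n - a` maps the elements of `T` below `n` injectively to gaps of `T`, so at least half of
`[0, n]` consists of gaps; hence `T` has no gap beyond `2γ`, and `S` has at most γ even gaps.
Among the first `g - 1` gaps of `S` there are then `e ≤ γ` even ones, with sum at least `e(e+1)`,
and `g - 1 - e` odd ones, with sum at least `(g - 1 - e)²`. This lower bound for `∑ ℓᵢ` is
smallest at `e = γ`, where it is exactly the claimed bound for `W_K`. -/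

open Finset

theorem Finset.sum_range_card_le_sum {M : Type*} [AddCommMonoid M] [PartialOrder M]
    [IsOrderedAddMonoid M] {f : ℕ → M} (hf : Monotone f) (s : Finset ℕ) :
    ∑ i ∈ range #s, f i ≤ ∑ i ∈ s, f i := by
  induction s using Finset.induction_on_max with
  | empty => simp
  | insert a s ha ih =>
    have hs : #s ≤ a := by
      simpa using card_le_card fun x hx => mem_range.2 (ha x hx)
    rw [card_insert_of_notMem fun h => (ha a h).false, sum_range_succ, sum_insert
      fun h => (ha a h).false, add_comm (f a)]
    exact add_le_add ih (hf hs)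

theorem Finset.sum_range_card_le_sum_of_subset_range {f : ℕ → ℕ} (hf : StrictMono f)
    {s : Finset ℕ} (hs : ↑s ⊆ Set.range f) : ∑ i ∈ range #s, f i ≤ ∑ u ∈ s, u := by
  rw [← Set.image_univ, subset_set_image_iff] at hs
  obtain ⟨t, -, rfl⟩ := hs
  rw [card_image_of_injective t hf.injective, sum_image hf.injective.injOn]
  exact sum_range_card_le_sum hf.monotone t

theorem Finset.card_mul_card_le_sum_of_odd {s : Finset ℕ} (hs : ∀ u ∈ s, Odd u) :
    #s * #s ≤ ∑ u ∈ s, u := by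
  have sum_odd (n : ℕ) : ∑ i ∈ range n, (2 * i + 1) = n * n := by
    induction n with
    | zero => rfl
    | succ n ih => rw [sum_range_succ, ih]; ring
  rw [← sum_odd]
  exact sum_range_card_le_sum_of_subset_range (fun a b h => by omega)
    fun u hu => (hs u hu).imp fun _ h => h.symm

theorem Finset.card_mul_card_add_one_le_sum_of_even {s : Finset ℕ}
    (hs : ∀ u ∈ s, Even u ∧ u ≠ 0) : #s * (#s + 1) ≤ ∑ u ∈ s, u := by
  have sum_even (n : ℕ) : ∑ i ∈ range n, (2 * i + 2) = n * (n + 1) := by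
    induction n with
    | zero => rfl
    | succ n ih => rw [sum_range_succ, ih]; ring
  rw [← sum_even]
  refine sum_range_card_le_sum_of_subset_range (fun a b h => by omega) fun u hu => ?_
  obtain ⟨⟨m, rfl⟩, h0⟩ := hs u hu
  exact ⟨m - 1, by dsimp only; omega⟩

theorem Finset.mul_add_mul_le_sum_of_card_filter_even_le {s : Finset ℕ} {γ : ℕ} (h0 : 0 ∉ s)
    (hγ : #{u ∈ s | Even u} ≤ γ) (hs : 2 * γ ≤ #s) :
    γ * (γ + 1) + (#s - γ) * (#s - γ) ≤ ∑ u ∈ s, u := by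
  have heven := card_mul_card_add_one_le_sum_of_even (s := {u ∈ s | Even u}) fun u hu =>
    ⟨(mem_filter.1 hu).2, ne_of_mem_of_not_mem (mem_filter.1 hu).1 h0⟩
  have hodd := card_mul_card_le_sum_of_odd (s := {u ∈ s | ¬Even u}) fun u hu =>
    Nat.not_even_iff_odd.1 (mem_filter.1 hu).2
  have hcard := card_filter_add_card_filter_not (s := s) (Even ·)
  rw [← sum_filter_add_sum_filter_not s (Even ·)]
  obtain ⟨d, hd⟩ : ∃ d, γ = #{u ∈ s | Even u} + d := ⟨_, (Nat.add_sub_of_le hγ).symm⟩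
  have : #s - γ + d = #{u ∈ s | ¬Even u} := by omega
  -- the bound exceeds the claimed one by `2d² - d + 2d(#s - 2γ) ≥ 0`
  nlinarith [Nat.le_mul_self d]

section AddSubmonoid
open scoped Classical

theorem AddSubmonoid.succ_le_two_mul_card_filter_notMem (T : AddSubmonoid ℕ) {n : ℕ}
    (hn : n ∉ T) : n + 1 ≤ 2 * #{k ∈ range (n + 1) | k ∉ T} := by
  have hsplit := card_filter_add_card_filter_not (s := range (n + 1)) (· ∈ T)
  have hle : #{k ∈ range (n + 1) | k ∈ T} ≤ #{k ∈ range (n + 1) | k ∉ T} := by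
    refine card_le_card_of_injOn (n - ·) (fun a ha => ?_) fun a ha b hb h => ?_
    · simp only [coe_filter, mem_range, Set.mem_ofPred_eq] at ha ⊢
      refine ⟨by omega, fun hna => hn ?_⟩
      simpa [Nat.add_sub_cancel' (Nat.lt_succ_iff.1 ha.1)] using T.add_mem ha.2 hna
    · simp only [coe_filter, mem_range, Set.mem_ofPred_eq] at ha hb h
      omega
  rw [card_range] at hsplit
  omega

theorem AddSubmonoid.mem_of_card_filter_notMem_le (T : AddSubmonoid ℕ) {γ : ℕ}
    (hgaps : #{k ∈ Icc 1 (2 * γ) | k ∉ T} ≤ γ) (hmem : 2 * γ + 1 ∈ T) {n : ℕ}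
    (hn : 2 * γ + 1 ≤ n) : n ∈ T := by
  induction n using Nat.strong_induction_on with
  | _ n ih =>
  by_contra hnT
  have hsub : {k ∈ range (n + 1) | k ∉ T} ⊆ insert n {k ∈ Icc 1 (2 * γ) | k ∉ T} := by
    intro k hk
    simp only [mem_filter, mem_range, mem_insert, mem_Icc] at hk ⊢
    have hk0 : k ≠ 0 := by rintro rfl; exact hk.2 T.zero_mem
    by_cases hkγ : k ≤ 2 * γ
    · exact Or.inr ⟨⟨by omega, hkγ⟩, hk.2⟩
    · by_contra hkn
      exact hk.2 (ih k (by omega) (by omega))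
  have hn' : n ≠ 2 * γ + 1 := by rintro rfl; exact hnT hmem
  have := T.succ_le_two_mul_card_filter_notMem hnT
  have := (card_le_card hsub).trans (card_insert_le _ _)
  omega

end AddSubmonoid

def IsNumericalSemigroup.toAddSubmonoid {S : Set ℕ} (hS : IsNumericalSemigroup S) :
    AddSubmonoid ℕ where
  carrier := S
  add_mem' := fun ha hb => hS.2.1 _ ha _ hb
  zero_mem' := hS.1

section Gaps

variable {S : Set ℕ}

theorem gap_notMem (hfin : Sᶜ.Finite) {i : ℕ} (hi : i < genus S) : gap S i ∉ S :=
  Nat.nth_mem_of_lt_card hfin (by rwa [genus, Set.ncard_eq_toFinset_card _ hfin] at hi)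

theorem gap_strictMonoOn (hfin : Sᶜ.Finite) : StrictMonoOn (gap S) (Set.Iio (genus S)) := by
  rw [genus, Set.ncard_eq_toFinset_card _ hfin]
  exact Nat.nth_strictMonoOn hfin

theorem lt_gap (h0 : 0 ∈ S) (hfin : Sᶜ.Finite) {i : ℕ} (hi : i < genus S) : i < gap S i := by
  induction i with
  | zero => exact Nat.pos_of_ne_zero fun h => gap_notMem hfin hi (by rwa [h])
  | succ i ih =>
    have := gap_strictMonoOn hfin (show i < genus S by omega) hi (Nat.lt_succ_self i)
    have := ih (by omega)
    omega

theorem Kweight_add_sum_range (h0 : 0 ∈ S) (hfin : Sᶜ.Finite) :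
    Kweight S + ∑ i ∈ range (genus S), i =
      ∑ i ∈ range (genus S - 1), gap S i + (genus S - 1) := by
  obtain hg | ⟨n, hg⟩ : genus S = 0 ∨ ∃ n, genus S = n + 1 := by cases genus S <;> simp
  · simp [Kweight, hg]
  have hsum : ∑ i ∈ range n, (gap S i - (i + 1)) + ∑ i ∈ range n, (i + 1) =
      ∑ i ∈ range n, gap S i := by
    rw [← sum_add_distrib]
    refine sum_congr rfl fun i hi => Nat.sub_add_cancel (lt_gap h0 hfin ?_)
    have := mem_range.1 hi
    omega
  rw [Kweight, hg, sum_range_succ', Nat.add_sub_cancel]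
  omega

end Gaps

namespace GammaHyperelliptic

variable {γ : ℕ} {S : Set ℕ}

theorem four_mul_add_two_mem (hfin : Sᶜ.Finite) (hγ : GammaHyperelliptic γ S) :
    4 * γ + 2 ∈ S := by
  have hinf : {n | n ∈ S ∧ n ≠ 0}.Infinite :=
    (compl_compl S ▸ hfin.infinite_compl).sdiff (Set.finite_singleton 0)
  simpa [hγ.2] using (Nat.nth_mem_of_infinite hinf γ).1

open scoped Classical in
theorem card_filter_two_mul_notMem (hγ : GammaHyperelliptic γ S) :
    #{k ∈ Icc 1 (2 * γ) | 2 * k ∉ S} = γ := by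
  have heven : {n | n ∈ Set.Icc 2 (4 * γ) ∧ Even n ∧ n ∈ S} =
      ↑({k ∈ Icc 1 (2 * γ) | 2 * k ∈ S}.image (2 * ·)) := by
    ext n
    simp only [Set.mem_Icc, Set.mem_ofPred_eq, coe_image, coe_filter, mem_Icc, Set.mem_image]
    constructor
    · rintro ⟨hn, ⟨k, rfl⟩, hS⟩
      exact ⟨k, ⟨⟨by omega, by omega⟩, by rwa [two_mul]⟩, two_mul k⟩
    · rintro ⟨k, ⟨hk, hS⟩, rfl⟩
      exact ⟨⟨by omega, by omega⟩, even_two_mul k, hS⟩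
  have hmem := hγ.1
  rw [heven, Set.ncard_coe_finset, card_image_of_injective _ (mul_right_injective₀ two_ne_zero)]
    at hmem
  have hsplit := card_filter_add_card_filter_not (s := Icc 1 (2 * γ)) (2 * · ∈ S)
  rw [Nat.card_Icc] at hsplit
  omega

theorem even_mem (hS : IsNumericalSemigroup S) (hγ : GammaHyperelliptic γ S) {n : ℕ}
    (hn : Even n) (hle : 4 * γ + 2 ≤ n) : n ∈ S := by
  set T := hS.toAddSubmonoid.comap (AddMonoidHom.mulLeft 2)
  have hT (k : ℕ) : k ∈ T ↔ 2 * k ∈ S := Iff.rfl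
  obtain ⟨k, rfl⟩ := hn
  rw [← two_mul, ← hT]
  refine T.mem_of_card_filter_notMem_le hγ.card_filter_two_mul_notMem.le ?_ (by omega)
  rw [hT, mul_add, ← mul_assoc]
  exact hγ.four_mul_add_two_mem hS.2.2

theorem card_filter_even_le (hS : IsNumericalSemigroup S) (hγ : GammaHyperelliptic γ S)
    {s : Finset ℕ} (hs : ∀ u ∈ s, u ∉ S) : #{u ∈ s | Even u} ≤ γ := by
  classical
  calc #{u ∈ s | Even u}
    _ ≤ #({k ∈ Icc 1 (2 * γ) | 2 * k ∉ S}.image (2 * ·)) := by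
      refine card_le_card fun u hu => ?_
      obtain ⟨hus, k, rfl⟩ := mem_filter.1 hu
      have hk0 : k ≠ 0 := by rintro rfl; exact hs 0 hus hS.1
      have hkγ : k ≤ 2 * γ := by
        by_contra! h
        exact hs _ hus (hγ.even_mem hS ⟨k, rfl⟩ (by omega))
      refine mem_image.2 ⟨k, mem_filter.2 ⟨mem_Icc.2 ⟨by omega, hkγ⟩, ?_⟩, two_mul k⟩
      rw [two_mul]
      exact hs _ hus
    _ ≤ #{k ∈ Icc 1 (2 * γ) | 2 * k ∉ S} := card_image_le
    _ = γ := hγ.card_filter_two_mul_notMem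

end GammaHyperelliptic

theorem Kweight_lower_bound (γ g : ℕ) (S : Set ℕ)
    (hS : IsNumericalSemigroup S) (hγ : GammaHyperelliptic γ S)
    (hg : genus S = g) (hgen : 2 * γ + 1 ≤ g) :
    Nat.choose (g - 2 * γ) 2 + 2 * γ ≤ Kweight S := by
  obtain ⟨m, rfl⟩ : ∃ m, g = 2 * γ + 1 + m := ⟨g - (2 * γ + 1), by omega⟩
  have hinj : Set.InjOn (gap S) (range (2 * γ + m)) :=
    (gap_strictMonoOn hS.2.2).injOn.mono fun i hi => by
      simp only [coe_range, Set.mem_Iio] at hi ⊢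
      omega
  have hgaps : ∀ u ∈ (range (2 * γ + m)).image (gap S), u ∉ S := by
    simp only [mem_image, mem_range]
    rintro _ ⟨i, hi, rfl⟩
    exact gap_notMem hS.2.2 (by omega)
  have hsum := mul_add_mul_le_sum_of_card_filter_even_le (fun h => hgaps 0 h hS.1)
    (hγ.card_filter_even_le hS hgaps) (by rw [card_image_of_injOn hinj, card_range]; omega)
  rw [card_image_of_injOn hinj, card_range, sum_image hinj] at hsum
  have hK := Kweight_add_sum_range hS.1 hS.2.2
  have hT := sum_range_id_mul_two (2 * γ + 1 + m)
  have hC : (m + 1).choose 2 * 2 = (m + 1) * m := by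
    rw [Nat.choose_two_right, ← sum_range_id, sum_range_id_mul_two, Nat.add_sub_cancel]
  have hg1 : 2 * γ + 1 + m - 1 = 2 * γ + m := by omega
  rw [hg, hg1] at hK
  rw [hg1] at hT
  rw [show 2 * γ + m - γ = γ + m by omega] at hsum
  rw [show 2 * γ + 1 + m - 2 * γ = m + 1 by omega]
  linarith
end

section
/- Let γ ≥ 1 be an integer and let S be a γ-hyperelliptic numerical semigroup of genus g ≥ 3γ whose multiplicity (smallest nonzero element) is 4. Then there exists an integer k with 1 ≤ k ≤ γ+1 such that W_K(S) = C(g-2γ, 2) + γ² + γ + k² - 3k + 2. -/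
open Finset

section Gaps

variable {S : Set ℕ} {G : Finset ℕ}

theorem genus_eq_card (hG : (G : Set ℕ) = Sᶜ) : genus S = #G := by
  rw [genus, ← hG, Set.ncard_coe_finset]

theorem gap_eq_nth_mem (hG : (G : Set ℕ) = Sᶜ) : gap S = Nat.nth (· ∈ G) := by
  have : (fun n => n ∉ S) = (· ∈ G) := by
    ext n; rw [← Set.mem_compl_iff, ← hG, mem_coe]
  unfold gap; rw [this]

theorem exists_finite_toFinset_eq_self (G : Finset ℕ) :
    ∃ hf : {n | n ∈ G}.Finite, hf.toFinset = G :=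
  ⟨G.finite_toSet, by ext; simp⟩

theorem image_gap_range_card (hG : (G : Set ℕ) = Sᶜ) : (range #G).image (gap S) = G := by
  obtain ⟨hf, hfG⟩ := exists_finite_toFinset_eq_self G
  have := Nat.image_nth_Iio_card hf
  rw [hfG] at this
  rw [← coe_inj, coe_image, coe_range, gap_eq_nth_mem hG, this]
  rfl

theorem gap_mem (hG : (G : Set ℕ) = Sᶜ) {i : ℕ} (hi : i < #G) : gap S i ∈ G := by
  have := mem_image_of_mem (gap S) (mem_range.2 hi)
  rwa [image_gap_range_card hG] at this

theorem sum_gap_range_card {β : Type*} [AddCommMonoid β] (hG : (G : Set ℕ) = Sᶜ) (f : ℕ → β) :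
    ∑ i ∈ range #G, f (gap S i) = ∑ x ∈ G, f x := by
  obtain ⟨hf, hfG⟩ := exists_finite_toFinset_eq_self G
  have hinj := Nat.nth_injOn hf
  rw [hfG, ← gap_eq_nth_mem hG] at hinj
  conv_rhs => rw [← image_gap_range_card hG]
  rw [sum_image (fun i hi j hj h => hinj (by simpa using hi) (by simpa using hj) h)]

theorem gap_card_sub_one (hG : (G : Set ℕ) = Sᶜ) {F : ℕ} (hF : IsGreatest Sᶜ F) :
    gap S (#G - 1) = F := by
  obtain ⟨hf, hfG⟩ := exists_finite_toFinset_eq_self G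
  have hmono := Nat.nth_strictMonoOn hf
  rw [hfG, ← gap_eq_nth_mem hG] at hmono
  have hF' : F ∈ (range #G).image (gap S) := by
    rw [image_gap_range_card hG, ← mem_coe, hG]; exact hF.1
  obtain ⟨j, hj, rfl⟩ := mem_image.1 hF'
  rw [mem_range] at hj
  have hlast : gap S (#G - 1) ∈ Sᶜ := by
    rw [← hG, mem_coe]; exact gap_mem hG (by omega)
  exact le_antisymm (hF.2 hlast)
    (hmono.monotoneOn hj (Set.mem_Iio.2 (by omega)) (by omega))

theorem succ_le_gap (h0 : 0 ∈ S) (hG : (G : Set ℕ) = Sᶜ) {i : ℕ} (hi : i < #G) :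
    i + 1 ≤ gap S i := by
  obtain ⟨hf, hfG⟩ := exists_finite_toFinset_eq_self G
  have hmono := Nat.nth_strictMonoOn hf
  rw [hfG, ← gap_eq_nth_mem hG] at hmono
  induction i with
  | zero =>
    have hmem := gap_mem hG hi
    have : gap S 0 ≠ 0 := fun h => by rw [← mem_coe, hG, h] at hmem; exact hmem h0
    omega
  | succ i ih =>
    have := hmono (by simp; omega) (by simpa using hi) (Nat.lt_add_one i)
    have := ih (by omega)
    omega

theorem Kweight_mul_two (h0 : 0 ∈ S) (hG : (G : Set ℕ) = Sᶜ) {F : ℕ} (hF : IsGreatest Sᶜ F) :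
    (Kweight S : ℤ) * 2 =
      2 * ∑ x ∈ G, (x : ℤ) - 2 * F - #G * (#G - 1) + 2 * (#G - 1) := by
  obtain ⟨g, hg⟩ : ∃ g, #G = g + 1 := by
    refine Nat.exists_eq_add_one.2 (card_pos.2 ?_)
    rw [← coe_nonempty, hG]; exact ⟨F, hF.1⟩
  have hgap : ∑ i ∈ range g, (gap S i : ℤ) = ∑ x ∈ G, (x : ℤ) - F := by
    rw [← sum_gap_range_card hG, ← gap_card_sub_one hG hF, hg, sum_range_succ,
      Nat.add_sub_cancel, add_sub_cancel_right]
  have hid : (∑ i ∈ range g, ((i : ℤ) + 1)) * 2 = (g + 1) * g := by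
    have := sum_range_id_mul_two (g + 1)
    rw [sum_range_succ'] at this
    exact_mod_cast this
  have hsub : ∑ i ∈ range g, ((gap S i - (i + 1) : ℕ) : ℤ) =
      ∑ i ∈ range g, (gap S i : ℤ) - ∑ i ∈ range g, ((i : ℤ) + 1) := by
    rw [← sum_sub_distrib]
    refine sum_congr rfl fun i hi => ?_
    rw [Nat.cast_sub (succ_le_gap h0 hG (by simp at hi; omega))]
    push_cast; ring
  rw [Kweight, genus_eq_card hG, hg, Nat.add_sub_cancel, ← add_assoc, Nat.add_sub_cancel,
    Nat.cast_add, Nat.cast_sum]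
  push_cast
  linear_combination 2 * hsub + 2 * hgap - hid

end Gaps

namespace IsNumericalSemigroup

variable {S : Set ℕ}

theorem mul_mem (hS : IsNumericalSemigroup S) {m : ℕ} (hm : m ∈ S) (k : ℕ) : m * k ∈ S := by
  induction k with
  | zero => exact hS.1
  | succ k ih => exact hS.2.1 _ ih _ hm

theorem exists_mem_mod_eq (hS : IsNumericalSemigroup S) {m r : ℕ} (hr : r < m) :
    ∃ n, n ∈ S ∧ n % m = r := by
  obtain ⟨N, hN⟩ := hS.2.2.bddAbove
  refine ⟨m * (N + 1) + r, by_contra fun h => ?_, by rw [Nat.mul_add_mod, Nat.mod_eq_of_lt hr]⟩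
  have := hN h
  nlinarith

end IsNumericalSemigroup

noncomputable def apery (S : Set ℕ) (m r : ℕ) : ℕ := sInf {n | n ∈ S ∧ n % m = r}

section Apery

variable {S : Set ℕ} {m : ℕ}

theorem apery_le {n : ℕ} (hn : n ∈ S) : apery S m (n % m) ≤ n :=
  Nat.sInf_le ⟨hn, rfl⟩

theorem apery_mem (hS : IsNumericalSemigroup S) {r : ℕ} (hr : r < m) :
    apery S m r ∈ S ∧ apery S m r % m = r :=
  Nat.sInf_mem (hS.exists_mem_mod_eq hr)

theorem mem_iff_apery_le (hS : IsNumericalSemigroup S) (hm : m ∈ S) (hm0 : 0 < m) {n : ℕ} :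
    n ∈ S ↔ apery S m (n % m) ≤ n := by
  refine ⟨apery_le, fun h => ?_⟩
  obtain ⟨hw, hwm⟩ := apery_mem hS (Nat.mod_lt n hm0)
  have : n = apery S m (n % m) + m * ((n - apery S m (n % m)) / m) := by
    rw [Nat.mul_div_cancel' (Nat.dvd_of_mod_eq_zero (Nat.sub_mod_eq_zero_of_mod_eq hwm.symm)),
      Nat.add_sub_cancel' h]
  rw [this]
  exact hS.2.1 _ hw _ (hS.mul_mem hm _)

theorem apery_le_add (hS : IsNumericalSemigroup S) {r s : ℕ} (hr : r < m) (hs : s < m) :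
    apery S m ((r + s) % m) ≤ apery S m r + apery S m s := by
  obtain ⟨hwr, hwrm⟩ := apery_mem hS hr
  obtain ⟨hws, hwsm⟩ := apery_mem hS hs
  have := apery_le (m := m) (hS.2.1 _ hwr _ hws)
  rwa [Nat.add_mod, hwrm, hwsm] at this

end Apery

theorem dvd_of_mem_of_lt_nth {S : Set ℕ} {m γ n : ℕ} (hm : 0 < m) (hmul : ∀ k, m * k ∈ S)
    (hγ : m * γ < Nat.nth (fun n => n ∈ S ∧ n ≠ 0) γ) (hn : n ∈ S)
    (hlt : n < Nat.nth (fun n => n ∈ S ∧ n ≠ 0) γ) : m ∣ n := by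
  classical
  set x := Nat.nth (fun n => n ∈ S ∧ n ≠ 0) γ
  by_contra hdvd
  have hinf : {n | n ∈ S ∧ n ≠ 0}.Infinite :=
    Set.infinite_of_injective_forall_mem (f := fun k => m * (k + 1))
      (fun a b h => by simpa [hm.ne'] using h) fun k => ⟨hmul _, by positivity⟩
  have hcount : #((range x).filter fun n => n ∈ S ∧ n ≠ 0) = γ := by
    rw [← Nat.count_eq_card_filter_range]; exact Nat.count_nth_of_infinite hinf γ
  have hsub : insert n ((range γ).image fun k => m * (k + 1)) ⊆
      (range x).filter fun n => n ∈ S ∧ n ≠ 0 := by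
    refine insert_subset (by simp [hn, hlt]; rintro rfl; simp at hdvd) fun y hy => ?_
    obtain ⟨k, hk, rfl⟩ := mem_image.1 hy
    simp only [mem_filter, mem_range] at hk ⊢
    refine ⟨by nlinarith, hmul _, by positivity⟩
  have hnotMem : n ∉ (range γ).image fun k => m * (k + 1) := by
    simp only [mem_image, not_exists, not_and]
    exact fun k _ h => hdvd ⟨k + 1, h.symm⟩
  have := card_le_card hsub
  rw [card_insert_of_notMem hnotMem, card_image_of_injective _
    (fun a b h => by simpa [hm.ne'] using h), card_range, hcount] at this
  omega

def progression (m r n : ℕ) : Finset ℕ := (range n).image (m * · + r)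

section Progression

variable {m r n : ℕ}

theorem mem_progression (hr : r < m) {x : ℕ} :
    x ∈ progression m r n ↔ x % m = r ∧ x < m * n + r := by
  simp only [progression, mem_image, mem_range]
  constructor
  · rintro ⟨j, hj, rfl⟩
    refine ⟨by rw [Nat.mul_add_mod, Nat.mod_eq_of_lt hr], by nlinarith⟩
  · rintro ⟨hx, hxn⟩
    refine ⟨x / m, Nat.lt_of_mul_lt_mul_left (a := m) ?_, by rw [← hx, Nat.div_add_mod]⟩
    have := Nat.div_add_mod x m
    omega

theorem progression_injective (hm : 0 < m) : Function.Injective (m * · + r) :=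
  fun a b h => by simpa [hm.ne'] using h

theorem card_progression (hm : 0 < m) : #(progression m r n) = n := by
  rw [progression, card_image_of_injective _ (progression_injective hm), card_range]

theorem sum_progression_mul_two (hm : 0 < m) :
    (∑ x ∈ progression m r n, (x : ℤ)) * 2 = m * n * (n - 1) + 2 * r * n := by
  rw [progression, sum_image fun a _ b _ h => progression_injective hm h]
  induction n with
  | zero => simp
  | succ n ih => push_cast at ih ⊢; rw [sum_range_succ]; linear_combination ih

theorem disjoint_progression {s n' : ℕ} (hr : r < m) (hs : s < m) (hrs : r ≠ s) :
    Disjoint (progression m r n) (progression m s n') :=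
  disjoint_left.2 fun _ hx hx' => hrs <| ((mem_progression hr).1 hx).1.symm.trans
    ((mem_progression hs).1 hx').1

end Progression

theorem compl_eq_progressions_apery {S : Set ℕ} (hS : IsNumericalSemigroup S) (h4 : 4 ∈ S) :
    Sᶜ = ↑(progression 4 1 (apery S 4 1 / 4) ∪ progression 4 2 (apery S 4 2 / 4) ∪
      progression 4 3 (apery S 4 3 / 4)) := by
  have h0 : apery S 4 0 = 0 := Nat.le_zero.1 (apery_le (m := 4) hS.1)
  have h1 := (apery_mem hS (m := 4) (r := 1) (by norm_num)).2
  have h2 := (apery_mem hS (m := 4) (r := 2) (by norm_num)).2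
  have h3 := (apery_mem hS (m := 4) (r := 3) (by norm_num)).2
  ext x
  simp only [Set.mem_compl_iff, mem_iff_apery_le hS h4 (by norm_num), not_le, coe_union,
    Set.mem_union, mem_coe, mem_progression (show 1 < 4 by norm_num),
    mem_progression (show 2 < 4 by norm_num), mem_progression (show 3 < 4 by norm_num)]
  obtain h | h | h | h : x % 4 = 0 ∨ x % 4 = 1 ∨ x % 4 = 2 ∨ x % 4 = 3 := by omega
  all_goals rw [h]; omega

theorem apery_four_of_nth_eq {S : Set ℕ} (hS : IsNumericalSemigroup S) (h4 : 4 ∈ S) {γ : ℕ}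
    (hγS : Nat.nth (fun n => n ∈ S ∧ n ≠ 0) γ = 4 * γ + 2) :
    4 * γ + 2 < apery S 4 1 ∧ apery S 4 2 = 4 * γ + 2 ∧ 4 * γ + 2 < apery S 4 3 := by
  have hdvd : ∀ n ∈ S, n < 4 * γ + 2 → 4 ∣ n := fun n hn hlt =>
    dvd_of_mem_of_lt_nth (γ := γ) (by norm_num) (hS.mul_mem h4) (by omega) hn (by omega)
  obtain ⟨hw1, hw1m⟩ := apery_mem hS (m := 4) (r := 1) (by norm_num)
  obtain ⟨hw2, hw2m⟩ := apery_mem hS (m := 4) (r := 2) (by norm_num)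
  obtain ⟨hw3, hw3m⟩ := apery_mem hS (m := 4) (r := 3) (by norm_num)
  have hmem : 4 * γ + 2 ∈ S := (hγS ▸ Nat.nth_mem_of_ne_zero (by omega)).1
  have hle := apery_le (m := 4) hmem
  rw [show (4 * γ + 2) % 4 = 2 by omega] at hle
  have := mt (hdvd _ hw1) (by omega)
  have := mt (hdvd _ hw2) (by omega)
  have := mt (hdvd _ hw3) (by omega)
  omega

theorem compl_eq_progressions {S : Set ℕ} (hS : IsNumericalSemigroup S) (h4 : 4 ∈ S) {γ : ℕ}
    (hγS : Nat.nth (fun n => n ∈ S ∧ n ≠ 0) γ = 4 * γ + 2) :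
    ∃ a c, Sᶜ = ↑(progression 4 1 a ∪ progression 4 2 γ ∪ progression 4 3 c) ∧
      γ < a ∧ c ≤ a + γ ∧ a ≤ c + γ + 1 := by
  obtain ⟨h1, h2, h3⟩ := apery_four_of_nth_eq hS h4 hγS
  have h1m := (apery_mem hS (m := 4) (r := 1) (by norm_num)).2
  have h3m := (apery_mem hS (m := 4) (r := 3) (by norm_num)).2
  have h31 : apery S 4 3 ≤ apery S 4 1 + apery S 4 2 :=
    apery_le_add hS (r := 1) (s := 2) (by norm_num) (by norm_num)
  have h13 : apery S 4 1 ≤ apery S 4 3 + apery S 4 2 :=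
    apery_le_add hS (r := 3) (s := 2) (by norm_num) (by norm_num)
  refine ⟨apery S 4 1 / 4, apery S 4 3 / 4, ?_, by omega, by omega, by omega⟩
  rw [compl_eq_progressions_apery hS h4, h2, show (4 * γ + 2) / 4 = γ by omega]

section ModFour

variable {S : Set ℕ} {a b c : ℕ}

theorem disjoint_progression_one_two : Disjoint (progression 4 1 a) (progression 4 2 b) :=
  disjoint_progression (by norm_num) (by norm_num) (by norm_num)

theorem disjoint_progression_one_two_three :
    Disjoint (progression 4 1 a ∪ progression 4 2 b) (progression 4 3 c) :=
  disjoint_union_left.2 ⟨disjoint_progression (by norm_num) (by norm_num) (by norm_num),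
    disjoint_progression (by norm_num) (by norm_num) (by norm_num)⟩

variable (hSc : Sᶜ = ↑(progression 4 1 a ∪ progression 4 2 b ∪ progression 4 3 c))
include hSc

theorem mem_compl_iff_of_compl_eq_progressions {x : ℕ} :
    x ∈ Sᶜ ↔ (x % 4 = 1 ∧ x < 4 * a + 1) ∨ (x % 4 = 2 ∧ x < 4 * b + 2) ∨
      (x % 4 = 3 ∧ x < 4 * c + 3) := by
  rw [hSc, mem_coe, mem_union, mem_union, mem_progression (by norm_num),
    mem_progression (by norm_num), mem_progression (by norm_num), or_assoc]

theorem genus_eq_of_compl_eq_progressions : genus S = a + b + c := by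
  rw [genus_eq_card hSc.symm, card_union_of_disjoint disjoint_progression_one_two_three,
    card_union_of_disjoint disjoint_progression_one_two, card_progression (by norm_num),
    card_progression (by norm_num), card_progression (by norm_num)]

theorem Kweight_mul_two_of_compl_eq_progressions (h0 : 0 ∈ S) {F : ℕ} (hF : IsGreatest Sᶜ F) :
    (Kweight S : ℤ) * 2 = 4 * a ^ 2 - 2 * a + 4 * b ^ 2 + 4 * c ^ 2 + 2 * c - 2 * F
      - (a + b + c) * (a + b + c - 1) + 2 * (a + b + c - 1) := by
  have hK := Kweight_mul_two h0 hSc.symm hF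
  rw [← genus_eq_card hSc.symm, genus_eq_of_compl_eq_progressions hSc,
    sum_union disjoint_progression_one_two_three, sum_union disjoint_progression_one_two] at hK
  have h1 := sum_progression_mul_two (m := 4) (r := 1) (n := a) (by norm_num)
  have h2 := sum_progression_mul_two (m := 4) (r := 2) (n := b) (by norm_num)
  have h3 := sum_progression_mul_two (m := 4) (r := 3) (n := c) (by norm_num)
  push_cast at hK h1 h2 h3
  linear_combination hK + h1 + h2 + h3

end ModFour

theorem Kweight_mult_four_general (γ g : ℕ) (S : Set ℕ)
    (hS : IsNumericalSemigroup S) (hγS : GammaHyperelliptic γ S)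
    (hg : genus S = g)
    (hmult : sInf {n | n ∈ S ∧ n ≠ 0} = 4) :
    ∃ k : ℕ, 1 ≤ k ∧ k ≤ γ + 1 ∧
      (Kweight S : ℤ) = Nat.choose (g - 2 * γ) 2 + γ ^ 2 + γ + k ^ 2 - 3 * k + 2 := by
  have h4 : 4 ∈ S := (hmult ▸ Nat.sInf_mem (Nat.nonempty_of_pos_sInf (by omega))).1
  obtain ⟨a, c, hSc, hγa, hca, hac⟩ := compl_eq_progressions hS h4 hγS.2
  have hmem := fun x => mem_compl_iff_of_compl_eq_progressions hSc (x := x)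
  rw [← hg, genus_eq_of_compl_eq_progressions hSc, show a + γ + c - 2 * γ = a + c - γ by omega]
  have hch := Nat.cast_choose_two ℚ (a + c - γ)
  rcases lt_or_ge c a with h | h
  · refine ⟨a - c, by omega, by omega, ?_⟩
    have hK := Kweight_mul_two_of_compl_eq_progressions hSc hS.1 (F := 4 * a - 3)
      ⟨(hmem _).2 (by omega), fun x hx => by have := (hmem x).1 hx; omega⟩
    qify [h.le, show 3 ≤ 4 * a by omega, show γ ≤ a + c by omega] at hK hch ⊢
    rw [hch]
    linear_combination hK / 2
  · refine ⟨c - a + 1, by omega, by omega, ?_⟩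
    have hK := Kweight_mul_two_of_compl_eq_progressions hSc hS.1 (F := 4 * c - 1)
      ⟨(hmem _).2 (by omega), fun x hx => by have := (hmem x).1 hx; omega⟩
    qify [h, show 1 ≤ 4 * c by omega, show γ ≤ a + c by omega] at hK hch ⊢
    rw [hch]
    linear_combination hK / 2

theorem Kweight_mult_four (γ g : ℕ) (hγ : 1 ≤ γ) (S : Set ℕ)
    (hS : IsNumericalSemigroup S) (hγS : GammaHyperelliptic γ S)
    (hg : genus S = g) (hgen : 3 * γ ≤ g)
    (hmult : sInf {n | n ∈ S ∧ n ≠ 0} = 4) :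
    ∃ k : ℕ, 1 ≤ k ∧ k ≤ γ + 1 ∧
      (Kweight S : ℤ) = Nat.choose (g - 2 * γ) 2 + γ ^ 2 + γ + k ^ 2 - 3 * k + 2 :=
  Kweight_mult_four_general γ g S hS hγS hg hmult
end

section
/- Let γ ≥ 1 be an integer, let g ≥ 3γ, and let k be an integer with 1 ≤ k ≤ γ+1. Let S₀ be the numerical semigroup generated by {4, 4γ+2, 2g-2γ-2k+3, 2g-2γ+2k+1}. Then S₀ equals the union of 2·⟨2, 2γ+1⟩ (the set of all elements of the numerical semigroup generated by {2, 2γ+1}, each multiplied by 2) together with {2g-2γ-2k+3, 2g-2γ-2k+7, ..., 2g-2γ+2k-1} ∪ {n ∈ ℕ : n ≥ 2g-2γ+2k+1}, and in particular the largest gap of S₀ is ℓ_g = 2g-2γ+2k-3. -/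
/-!
Write `b = a + 4k - 2`. The set of `n` with `n ≡ 0 (mod 4)`, or `n ≡ 2 (mod 4)` and
`n ≥ 4γ + 2`, or `n ∈ {a, a + 4, …, b - 2}`, or `n ≥ b`, contains the generators and is closed
under addition: a sum of two odd members is at least `2a ≥ 4γ + 2`, and an odd member plus
`4γ + 2` is at least `a + 4γ + 2 ≥ b` (this is `k ≤ γ + 1`). Conversely each such `n` is `0`,
`4γ + 2`, `a` or `b` plus a multiple of `4`. The even part of this set is `2·⟨2, 2γ+1⟩`, and its
largest gap is `b - 4`, the odd number below `b` congruent to `a + 2` modulo `4`.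
-/

lemma mem_of_le_of_dvd_sub {M : AddSubmonoid ℕ} {c d n : ℕ} (hd : d ∈ M) (hc : c ∈ M)
    (hcn : c ≤ n) (hdvd : d ∣ n - c) : n ∈ M := by
  obtain ⟨m, hm⟩ := hdvd
  have hn : n = c + m • d := by rw [smul_eq_mul, mul_comm, ← hm, Nat.add_sub_cancel' hcn]
  exact hn ▸ M.add_mem hc (M.nsmul_mem hd m)

lemma mem_closure_two_iff {γ n : ℕ} :
    n ∈ AddSubmonoid.closure ({2, 2 * γ + 1} : Set ℕ) ↔ n % 2 = 0 ∨ 2 * γ + 1 ≤ n := by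
  have h2 : 2 ∈ AddSubmonoid.closure ({2, 2 * γ + 1} : Set ℕ) :=
    AddSubmonoid.subset_closure (by simp)
  have hg : 2 * γ + 1 ∈ AddSubmonoid.closure ({2, 2 * γ + 1} : Set ℕ) :=
    AddSubmonoid.subset_closure (by simp)
  constructor
  · intro hn
    induction hn using AddSubmonoid.closure_induction with
    | mem x hx => rcases hx with rfl | rfl <;> omega
    | zero => omega
    | add x y _ _ hx hy => omega
  · intro hn
    rcases Nat.mod_two_eq_zero_or_one n with hn2 | hn2
    · exact mem_of_le_of_dvd_sub h2 (zero_mem _) n.zero_le (by omega)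
    · exact mem_of_le_of_dvd_sub h2 hg (by omega) (by omega)

lemma image_double_closure_two (γ : ℕ) :
    (fun x => 2 * x) '' (AddSubmonoid.closure ({2, 2 * γ + 1} : Set ℕ) : Set ℕ) =
      {n | n % 4 = 0 ∨ (n % 4 = 2 ∧ 4 * γ + 2 ≤ n)} := by
  ext n
  simp only [Set.mem_image, SetLike.mem_coe, mem_closure_two_iff, Set.mem_ofPred_eq]
  constructor
  · rintro ⟨m, hm, rfl⟩
    omega
  · intro hn
    exact ⟨n / 2, by omega, by omega⟩

section FourGenerators

variable {γ a b k : ℕ} (ha_odd : a % 2 = 1) (hab : a + 4 * k = b + 2) (hk : k ≤ γ + 1)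
  (ha : 2 * γ + 1 ≤ a) (hb : 4 * γ + 2 ≤ b)
include ha_odd hab hk ha hb

lemma mem_closure_four_iff {n : ℕ} :
    n ∈ AddSubmonoid.closure ({4, 4 * γ + 2, a, b} : Set ℕ) ↔
      n % 4 = 0 ∨ (n % 4 = 2 ∧ 4 * γ + 2 ≤ n) ∨ (a ≤ n ∧ n < b ∧ 4 ∣ n - a) ∨ b ≤ n := by
  set M := AddSubmonoid.closure ({4, 4 * γ + 2, a, b} : Set ℕ)
  have h4 : 4 ∈ M := AddSubmonoid.subset_closure (by simp)
  have he : 4 * γ + 2 ∈ M := AddSubmonoid.subset_closure (by simp)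
  have haM : a ∈ M := AddSubmonoid.subset_closure (by simp)
  have hbM : b ∈ M := AddSubmonoid.subset_closure (by simp)
  constructor
  · intro hn
    induction hn using AddSubmonoid.closure_induction with
    | mem x hx => rcases hx with rfl | rfl | rfl | rfl <;> omega
    | zero => omega
    | add x y _ _ hx hy => omega
  · intro hn
    have : 4 ∣ n - 0 ∨ (4 * γ + 2 ≤ n ∧ 4 ∣ n - (4 * γ + 2)) ∨ (a ≤ n ∧ 4 ∣ n - a) ∨
        (b ≤ n ∧ 4 ∣ n - b) := by
      omega
    rcases this with h | ⟨hle, h⟩ | ⟨hle, h⟩ | ⟨hle, h⟩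
    · exact mem_of_le_of_dvd_sub h4 (zero_mem _) n.zero_le h
    · exact mem_of_le_of_dvd_sub h4 he hle h
    · exact mem_of_le_of_dvd_sub h4 haM hle h
    · exact mem_of_le_of_dvd_sub h4 hbM hle h

lemma closure_four_eq :
    (AddSubmonoid.closure ({4, 4 * γ + 2, a, b} : Set ℕ) : Set ℕ) =
      (fun x => 2 * x) '' (AddSubmonoid.closure ({2, 2 * γ + 1} : Set ℕ) : Set ℕ) ∪
        {n | ∃ j < k, n = a + 4 * j} ∪ {n | b ≤ n} := by
  ext n
  rw [image_double_closure_two]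
  simp only [SetLike.mem_coe, mem_closure_four_iff ha_odd hab hk ha hb, Set.mem_union,
    Set.mem_ofPred_eq]
  constructor
  · rintro (h | h | ⟨hle, hlt, hdvd⟩ | h)
    · exact .inl (.inl (.inl h))
    · exact .inl (.inl (.inr h))
    · exact .inl (.inr ⟨(n - a) / 4, by omega, by omega⟩)
    · exact .inr h
  · rintro (((h | h) | ⟨j, hj, rfl⟩) | h)
    · exact .inl h
    · exact .inr (.inl h)
    · exact .inr (.inr (.inl ⟨by omega, by omega, by omega⟩))
    · exact .inr (.inr (.inr h))

lemma sSup_compl_closure_four (hk1 : 1 ≤ k) (hγ : 1 ≤ γ) :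
    sSup {n | n ∉ (AddSubmonoid.closure ({4, 4 * γ + 2, a, b} : Set ℕ) : Set ℕ)} = b - 4 := by
  refine IsGreatest.csSup_eq ⟨?_, fun n hn => ?_⟩
  · rw [Set.mem_ofPred_eq, SetLike.mem_coe, mem_closure_four_iff ha_odd hab hk ha hb]
    omega
  · rw [Set.mem_ofPred_eq, SetLike.mem_coe, mem_closure_four_iff ha_odd hab hk ha hb] at hn
    omega

end FourGenerators

theorem closure_description (γ g k : ℕ) (hγ : 1 ≤ γ) (hg : 3 * γ ≤ g)
    (hk1 : 1 ≤ k) (hk2 : k ≤ γ + 1) (S₀ : Set ℕ)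
    (hS₀ : S₀ = (AddSubmonoid.closure
      ({4, 4 * γ + 2, 2 * g - 2 * γ - 2 * k + 3, 2 * g - 2 * γ + 2 * k + 1} : Set ℕ) :
      Set ℕ)) :
    S₀ = ((fun x => 2 * x) '' (AddSubmonoid.closure ({2, 2 * γ + 1} : Set ℕ) : Set ℕ)) ∪
        {n : ℕ | ∃ j < k, n = 2 * g - 2 * γ - 2 * k + 3 + 4 * j} ∪
        {n : ℕ | 2 * g - 2 * γ + 2 * k + 1 ≤ n} ∧
      sSup {n | n ∉ S₀} = 2 * g - 2 * γ + 2 * k - 3 := by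
  have ha_odd : (2 * g - 2 * γ - 2 * k + 3) % 2 = 1 := by omega
  have hab : 2 * g - 2 * γ - 2 * k + 3 + 4 * k = 2 * g - 2 * γ + 2 * k + 1 + 2 := by omega
  have ha : 2 * γ + 1 ≤ 2 * g - 2 * γ - 2 * k + 3 := by omega
  have hb : 4 * γ + 2 ≤ 2 * g - 2 * γ + 2 * k + 1 := by omega
  subst hS₀
  refine ⟨closure_four_eq ha_odd hab hk2 ha hb, ?_⟩
  rw [sSup_compl_closure_four ha_odd hab hk2 ha hb hk1 hγ]
  omega
end

section
/- Let γ ≥ 0 be an integer, let g ≥ 2γ+1, and let S be a nonsymmetric γ-hyperelliptic numerical semigroup of genus g. Let S₀ be the numerical semigroup generated by {4, 4γ+2, 2g-4γ+1}, and let u_1(S) > u_2(S) > ... > u_γ(S) and u_1(S₀) > u_2(S₀) > ... > u_γ(S₀) denote the odd elements less than 2g of S and of S₀, respectively (there are exactly γ of each). Then u_i(S) - u_i(S₀) ≥ 2 for every i with 1 ≤ i ≤ k(S), where k(S) is the number of odd elements of S greater than or equal to the conductor of S. -/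
/-- The semigroupConductor of `S`: the smallest `c` such that every `n ≥ c` lies in `S`. -/
noncomputable def semigroupConductor (S : Set ℕ) : ℕ := sInf {c | ∀ n, c ≤ n → n ∈ S}

/-!
The odd numbers `2g - 1, 2g - 3, …, 2g + 1 - 2i` all lie above the conductor of `S` as soon as
`S` has at least `i` odd elements in `[c(S), 2g)`, so `u_i(S) ≥ 2g + 1 - 2i`. On the other side,
`2g - 4γ + 1 + 4j` for `j < γ` already gives `γ` odd elements of `S₀` below `2g`, hence all of them,
and `u_i(S₀) = 2g + 1 - 4i ≤ 2g - 1 - 2i`.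
-/

theorem mem_of_semigroupConductor_le {S : Set ℕ} (hS : Sᶜ.Finite) {n : ℕ}
    (hn : semigroupConductor S ≤ n) : n ∈ S := by
  have hne : {c | ∀ n, c ≤ n → n ∈ S}.Nonempty := by
    obtain ⟨B, hB⟩ := hS.bddAbove
    refine ⟨B + 1, fun n hn => ?_⟩
    by_contra h
    have := hB h
    omega
  exact Nat.sInf_mem hne n hn

theorem two_mul_le_of_le_ncard_odd {S : Set ℕ} {a b i : ℕ}
    (h : i ≤ {n | Odd n ∧ n ∈ S ∧ a ≤ n ∧ n < b}.ncard) : 2 * i ≤ b + 1 - a := by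
  have hcard : {n | Odd n ∧ n ∈ S ∧ a ≤ n ∧ n < b}.ncard ≤ (Set.Iio ((b + 1 - a) / 2)).ncard := by
    refine Set.ncard_le_ncard_of_injOn (fun n => (n - a) / 2) ?_ ?_ (Set.finite_Iio _)
    · rintro n ⟨-, -, han, hnb⟩
      simp only [Set.mem_Iio]
      omega
    · rintro n ⟨hn, -, han, -⟩ m ⟨hm, -, ham, -⟩ (hnm : (n - a) / 2 = (m - a) / 2)
      rw [Nat.odd_iff] at hn hm
      omega
  rw [Set.ncard_Iio_nat] at hcard
  omega

theorem ncard_le_of_subset_image {ι α : Type*} {s : Set ι} {A : Set α} {u : ι → α}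
    (hs : s.Finite) (hA : A ⊆ u '' s) : A.ncard ≤ s.ncard :=
  (Set.ncard_le_ncard hA (hs.image u)).trans (Set.ncard_image_le hs)

namespace StrictAntiOn

variable {A : Set ℕ} {u : ℕ → ℕ} {γ i : ℕ}

theorem le_apply_of_le_ncard (hu : StrictAntiOn u (Set.Icc 1 γ)) (hA : A ⊆ u '' Set.Icc 1 γ)
    (hi : i ∈ Set.Icc 1 γ) {x : ℕ} (hx : i ≤ {n ∈ A | x ≤ n}.ncard) : x ≤ u i := by
  by_contra! hux
  have hsub : {n ∈ A | x ≤ n} ⊆ u '' Set.Ico 1 i := by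
    rintro n ⟨hn, hxn⟩
    obtain ⟨j, hj, rfl⟩ := hA hn
    refine ⟨j, ⟨hj.1, lt_of_not_ge fun hij => ?_⟩, rfl⟩
    exact absurd (hu.antitoneOn hi hj hij) (by omega)
  have := ncard_le_of_subset_image (Set.finite_Ico 1 i) hsub
  rw [Set.ncard_Ico_nat] at this
  have := hi.1
  omega

theorem apply_le_of_le_ncard (hu : StrictAntiOn u (Set.Icc 1 γ)) (hA : A ⊆ u '' Set.Icc 1 γ)
    (hi : i ∈ Set.Icc 1 γ) {x : ℕ} (hx : γ + 1 - i ≤ {n ∈ A | n ≤ x}.ncard) : u i ≤ x := by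
  by_contra! hux
  have hsub : {n ∈ A | n ≤ x} ⊆ u '' Set.Ioc i γ := by
    rintro n ⟨hn, hnx⟩
    obtain ⟨j, hj, rfl⟩ := hA hn
    refine ⟨j, ⟨lt_of_not_ge fun hji => ?_, hj.2⟩, rfl⟩
    exact absurd (hu.antitoneOn hj hi hji) (by omega)
  have := ncard_le_of_subset_image (Set.finite_Ioc i γ) hsub
  rw [Set.ncard_Ioc_nat] at this
  have := hi.2
  omega

end StrictAntiOn

theorem le_ncard_odd_mem_ge {S : Set ℕ} {c g i : ℕ} (hS : ∀ n, c ≤ n → n ∈ S)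
    (hci : c + 2 * i ≤ 2 * g + 1) :
    i ≤ {n ∈ {n | Odd n ∧ n ∈ S ∧ n < 2 * g} | 2 * g + 1 - 2 * i ≤ n}.ncard := by
  calc i = (Set.Icc 1 i).ncard := by simp
    _ ≤ _ := by
      refine Set.ncard_le_ncard_of_injOn (fun t => 2 * g + 1 - 2 * t) ?_ ?_
        ((Set.finite_Iio (2 * g)).subset fun n hn => hn.1.2.2)
      · rintro t ⟨ht₁, hti⟩
        refine ⟨⟨?_, hS _ (by omega), by omega⟩, by omega⟩
        rw [Nat.odd_iff]
        omega
      · rintro t ⟨-, hti⟩ t' ⟨-, hti'⟩ (h : 2 * g + 1 - 2 * t = 2 * g + 1 - 2 * t')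
        omega

theorem le_ncard_odd_mem_addSubmonoid_le {M : AddSubmonoid ℕ} {γ g i : ℕ} (hg : 2 * γ ≤ g) (hi : 1 ≤ i)
    (h₄ : 4 ∈ M) (hM : 2 * g - 4 * γ + 1 ∈ M) :
    γ + 1 - i ≤ {n ∈ {n | Odd n ∧ n ∈ M ∧ n < 2 * g} | n ≤ 2 * g + 1 - 4 * i}.ncard := by
  calc γ + 1 - i = (Set.Icc i γ).ncard := by simp
    _ ≤ _ := by
      refine Set.ncard_le_ncard_of_injOn (fun t => 2 * g + 1 - 4 * t) ?_ ?_
        ((Set.finite_Iio (2 * g)).subset fun n hn => hn.1.2.2)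
      · rintro t ⟨hit, htγ⟩
        have hmem : 2 * g - 4 * γ + 1 + (γ - t) • 4 ∈ M := M.add_mem hM (M.nsmul_mem h₄ _)
        rw [smul_eq_mul, show 2 * g - 4 * γ + 1 + (γ - t) * 4 = 2 * g + 1 - 4 * t by omega] at hmem
        refine ⟨⟨?_, hmem, by omega⟩, by omega⟩
        rw [Nat.odd_iff]
        omega
      · rintro t ⟨hit, htγ⟩ t' ⟨hit', htγ'⟩ (h : 2 * g + 1 - 4 * t = 2 * g + 1 - 4 * t')
        omega

theorem odd_elements_gap_two_general (γ g : ℕ) (hg : 2 * γ + 1 ≤ g) (S S₀ : Set ℕ)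
    (hS : IsNumericalSemigroup S)
    (hS₀ : S₀ = (AddSubmonoid.closure ({4, 4 * γ + 2, 2 * g - 4 * γ + 1} : Set ℕ) : Set ℕ))
    (u u₀ : ℕ → ℕ)
    -- `u 1 > u 2 > ... > u γ` enumerates the odd elements of `S` less than `2g`
    (hu_anti : ∀ i j, 1 ≤ i → i < j → j ≤ γ → u j < u i)
    (hu_surj : ∀ n, Odd n → n ∈ S → n < 2 * g → ∃ i, 1 ≤ i ∧ i ≤ γ ∧ u i = n)
    -- `u₀ 1 > u₀ 2 > ... > u₀ γ` enumerates the odd elements of `S₀` less than `2g`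
    (hu₀_anti : ∀ i j, 1 ≤ i → i < j → j ≤ γ → u₀ j < u₀ i)
    (hu₀_surj : ∀ n, Odd n → n ∈ S₀ → n < 2 * g → ∃ i, 1 ≤ i ∧ i ≤ γ ∧ u₀ i = n) :
    ∀ i, 1 ≤ i →
      i ≤ {n | Odd n ∧ n ∈ S ∧ semigroupConductor S ≤ n ∧ n < 2 * g}.ncard →
      u₀ i + 2 ≤ u i := by
  intro i hi hik
  have hA : {n | Odd n ∧ n ∈ S ∧ n < 2 * g} ⊆ u '' Set.Icc 1 γ := fun n ⟨hodd, hn, hlt⟩ =>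
    let ⟨j, hj₁, hj₂, hj⟩ := hu_surj n hodd hn hlt
    ⟨j, ⟨hj₁, hj₂⟩, hj⟩
  have hA₀ : {n | Odd n ∧ n ∈ S₀ ∧ n < 2 * g} ⊆ u₀ '' Set.Icc 1 γ := fun n ⟨hodd, hn, hlt⟩ =>
    let ⟨j, hj₁, hj₂, hj⟩ := hu₀_surj n hodd hn hlt
    ⟨j, ⟨hj₁, hj₂⟩, hj⟩
  have hK : {n | Odd n ∧ n ∈ S ∧ semigroupConductor S ≤ n ∧ n < 2 * g} ⊆ u '' Set.Icc 1 γ :=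
    fun n ⟨hodd, hn, _, hlt⟩ => hA ⟨hodd, hn, hlt⟩
  have hiγ : i ≤ γ := hik.trans (by simpa using ncard_le_of_subset_image (Set.finite_Icc 1 γ) hK)
  have hc : semigroupConductor S + 2 * i ≤ 2 * g + 1 := by
    have := two_mul_le_of_le_ncard_odd hik
    omega
  have hu : 2 * g + 1 - 2 * i ≤ u i :=
    StrictAntiOn.le_apply_of_le_ncard (fun a ha b hb hab => hu_anti a b ha.1 hab hb.2) hA
      ⟨hi, hiγ⟩ (le_ncard_odd_mem_ge (fun _ => mem_of_semigroupConductor_le hS.2.2) hc)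
  have hu₀ : u₀ i ≤ 2 * g + 1 - 4 * i := by
    subst hS₀
    exact StrictAntiOn.apply_le_of_le_ncard (fun a ha b hb hab => hu₀_anti a b ha.1 hab hb.2) hA₀
      ⟨hi, hiγ⟩ (le_ncard_odd_mem_addSubmonoid_le (by omega) hi (AddSubmonoid.subset_closure (by simp))
        (AddSubmonoid.subset_closure (by simp)))
  omega

theorem odd_elements_gap_two (γ g : ℕ) (hg : 2 * γ + 1 ≤ g) (S S₀ : Set ℕ)
    (hS : IsNumericalSemigroup S) (hγS : GammaHyperelliptic γ S) (hgS : genus S = g)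
    (hnonsym : sSup {n | n ∉ S} ≠ 2 * g - 1)
    (hS₀ : S₀ = (AddSubmonoid.closure ({4, 4 * γ + 2, 2 * g - 4 * γ + 1} : Set ℕ) : Set ℕ))
    (u u₀ : ℕ → ℕ)
    -- `u 1 > u 2 > ... > u γ` enumerates the odd elements of `S` less than `2g`
    (hu_anti : ∀ i j, 1 ≤ i → i < j → j ≤ γ → u j < u i)
    (hu_mem : ∀ i, 1 ≤ i → i ≤ γ → Odd (u i) ∧ u i ∈ S ∧ u i < 2 * g)
    (hu_surj : ∀ n, Odd n → n ∈ S → n < 2 * g → ∃ i, 1 ≤ i ∧ i ≤ γ ∧ u i = n)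
    -- `u₀ 1 > u₀ 2 > ... > u₀ γ` enumerates the odd elements of `S₀` less than `2g`
    (hu₀_anti : ∀ i j, 1 ≤ i → i < j → j ≤ γ → u₀ j < u₀ i)
    (hu₀_mem : ∀ i, 1 ≤ i → i ≤ γ → Odd (u₀ i) ∧ u₀ i ∈ S₀ ∧ u₀ i < 2 * g)
    (hu₀_surj : ∀ n, Odd n → n ∈ S₀ → n < 2 * g → ∃ i, 1 ≤ i ∧ i ≤ γ ∧ u₀ i = n) :
    ∀ i, 1 ≤ i →
      i ≤ {n | Odd n ∧ n ∈ S ∧ semigroupConductor S ≤ n ∧ n < 2 * g}.ncard →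
      u₀ i + 2 ≤ u i :=
  odd_elements_gap_two_general γ g hg S S₀ hS hS₀ u u₀ hu_anti hu_surj hu₀_anti hu₀_surj
end
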